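/- arXiv:0706.2026 — 3 statements merged into one kernel-verified Lean document; each statement's English description precedes it below -/
import Mathlib

section
/- Let (X, Y, Z) be an irreducible triangle triple on a finite-dimensional complex vector space V. Then there exist nonzero complex numbers x, y, z, h with h^N = x·y·z such that X^N = x·Id_V, Y^N = y·Id_V, Z^N = z·Id_V and q^{-1}·XYZ = h·Id_V, and the dimension of V over ℂ is exactly N. -/
/-
By Schur's lemma every operator commuting with `X`, `Y` and `Z` is a scalar. This applies to
`X ^ N`, `Y ^ N`, `Z ^ N` because `q ^ 2` is an `N`-th root of unity, and to `X * Y * Z`, which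
the three relations make central. Then `h ^ N = x * y * z` comes from
`Y ^ N * Z ^ N = q ^ (N * (N - 1)) • (Y * Z) ^ N` together with `q ^ (N * N) = 1`.
For the dimension, take an eigenvector `v` of `X`: the vectors `Y ^ k v`, `k < N`, are
eigenvectors of `X` for the distinct eigenvalues `q ^ (2 * k) * μ`, and their span is invariant
(`Z v` is a multiple of `Y ^ (N - 1) v` because `X * Y * Z` is a scalar), hence is all of `V`.
-/

open TensorProduct

noncomputable section

/-- ℂ^N: functions from ℤ/Nℤ to ℂ. -/
abbrev CN (N : ℕ) := ZMod N → ℂ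

/-- The operator A with A e_k = q^{2k} e_k. -/
def opA (q : ℂ) (N : ℕ) : Module.End ℂ (CN N) where
  toFun f := fun k => q ^ (2 * k.val) * f k
  map_add' f g := by funext k; simp [mul_add]
  map_smul' c f := by funext k; simp [smul_eq_mul]; ring

/-- The operator B with B e_k = e_{k+1}. -/
def opB (N : ℕ) : Module.End ℂ (CN N) where
  toFun f := fun k => f (k - 1)
  map_add' f g := by funext k; simp
  map_smul' c f := by funext k; simp

/-- The operator C with C e_k = q^{1-2k} e_{k-1}, i.e. (C f)(k) = q^{-1-2k} f(k+1). -/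
def opC (q : ℂ) (N : ℕ) : Module.End ℂ (CN N) where
  toFun f := fun k => q ^ (-1 - 2 * (k.val : ℤ)) * f (k + 1)
  map_add' f g := by funext k; simp [mul_add]
  map_smul' c f := by funext k; simp [smul_eq_mul]; ring

/-- A Weyl pair: invertible endomorphisms with X Y = q² Y X. -/
def IsWeylPair (q : ℂ) {V : Type*} [AddCommMonoid V] [Module ℂ V]
    (X Y : Module.End ℂ V) : Prop :=
  IsUnit X ∧ IsUnit Y ∧ X * Y = q ^ 2 • (Y * X)

/-- A subspace invariant under both X and Y. -/
def WeylInvariant {V : Type*} [AddCommMonoid V] [Module ℂ V]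
    (X Y : Module.End ℂ V) (W : Submodule ℂ V) : Prop :=
  (∀ v ∈ W, X v ∈ W) ∧ (∀ v ∈ W, Y v ∈ W)

/-- An irreducible Weyl pair. -/
def IsIrreducibleWeylPair (q : ℂ) {V : Type*} [AddCommMonoid V] [Module ℂ V]
    (X Y : Module.End ℂ V) : Prop :=
  IsWeylPair q X Y ∧ Nontrivial V ∧
    ∀ W : Submodule ℂ V, WeylInvariant X Y W → W = ⊥ ∨ W = ⊤
/-- A triangle triple: invertible endomorphisms with XY = q²YX, YZ = q²ZY, ZX = q²XZ. -/
def IsTriangleTriple (q : ℂ) {V : Type*} [AddCommMonoid V] [Module ℂ V]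
    (X Y Z : Module.End ℂ V) : Prop :=
  IsUnit X ∧ IsUnit Y ∧ IsUnit Z ∧
    X * Y = q ^ 2 • (Y * X) ∧ Y * Z = q ^ 2 • (Z * Y) ∧ Z * X = q ^ 2 • (X * Z)

/-- A subspace invariant under X, Y and Z. -/
def TriangleInvariant {V : Type*} [AddCommMonoid V] [Module ℂ V]
    (X Y Z : Module.End ℂ V) (W : Submodule ℂ V) : Prop :=
  (∀ v ∈ W, X v ∈ W) ∧ (∀ v ∈ W, Y v ∈ W) ∧ (∀ v ∈ W, Z v ∈ W)

/-- An irreducible triangle triple. -/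
def IsIrreducibleTriangleTriple (q : ℂ) {V : Type*} [AddCommMonoid V] [Module ℂ V]
    (X Y Z : Module.End ℂ V) : Prop :=
  IsTriangleTriple q X Y Z ∧ Nontrivial V ∧
    ∀ W : Submodule ℂ V, TriangleInvariant X Y Z W → W = ⊥ ∨ W = ⊤

section QCommuting

variable {K R : Type*} [CommSemiring K] [Semiring R] [Algebra K R] {c : K} {a b d : R}

theorem pow_mul_eq_smul_mul_pow (h : a * b = c • (b * a)) (n : ℕ) :
    a ^ n * b = c ^ n • (b * a ^ n) := by
  induction n with
  | zero => simp
  | succ n ih =>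
    rw [pow_succ, mul_assoc, h, mul_smul_comm, ← mul_assoc, ih, smul_mul_assoc, smul_smul,
      mul_assoc, ← pow_succ']

theorem mul_pow_eq_smul_pow_mul (h : a * b = c • (b * a)) (n : ℕ) :
    a * b ^ n = c ^ n • (b ^ n * a) := by
  induction n with
  | zero => simp
  | succ n ih =>
    rw [pow_succ', ← mul_assoc, h, smul_mul_assoc, mul_assoc, ih, mul_smul_comm, smul_smul,
      ← mul_assoc, ← pow_succ', pow_succ]

theorem commute_pow_left_of_mul_eq_smul (h : a * b = c • (b * a)) {n : ℕ} (hc : c ^ n = 1) :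
    Commute (a ^ n) b :=
  (pow_mul_eq_smul_mul_pow h n).trans (by rw [hc, one_smul])

theorem commute_pow_right_of_mul_eq_smul (h : a * b = c • (b * a)) {n : ℕ} (hc : c ^ n = 1) :
    Commute a (b ^ n) :=
  (mul_pow_eq_smul_pow_mul h n).trans (by rw [hc, one_smul])

theorem pow_mul_pow_eq_smul_mul_pow (h : a * b = c • (b * a)) (n : ℕ) :
    a ^ n * b ^ n = c ^ n.choose 2 • (a * b) ^ n := by
  induction n with
  | zero => simp
  | succ n ih =>
    have hab : a * (a * b) = c • (a * b * a) := by rw [h, mul_smul_comm, ← mul_assoc, ← h]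
    calc a ^ (n + 1) * b ^ (n + 1) = a * (a ^ n * b ^ n) * b := by
          rw [pow_succ', pow_succ, mul_assoc, mul_assoc, mul_assoc]
      _ = c ^ n.choose 2 • (c ^ n • ((a * b) ^ n * a) * b) := by
          rw [ih, mul_smul_comm, smul_mul_assoc, mul_pow_eq_smul_pow_mul hab]
      _ = c ^ (n + 1).choose 2 • (a * b) ^ (n + 1) := by
          rw [smul_mul_assoc, smul_smul, ← pow_add, Nat.choose_succ_succ', Nat.choose_one_right,
            add_comm n, mul_assoc, ← pow_succ]

theorem commute_mul_of_mul_eq_smul (hab : a * b = c • (b * a)) (hda : d * a = c • (a * d)) :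
    Commute a (b * d) :=
  calc a * (b * d) = c • (b * (a * d)) := by rw [← mul_assoc, hab, smul_mul_assoc, mul_assoc]
    _ = b * d * a := by rw [← mul_smul_comm, ← hda, mul_assoc]

theorem commute_mul_mul_of_mul_eq_smul (hab : a * b = c • (b * a)) (hda : d * a = c • (a * d)) :
    Commute (a * b * d) a := by
  rw [mul_assoc]
  exact (Commute.refl a).mul_left (commute_mul_of_mul_eq_smul hab hda).symm

end QCommuting

theorem Nat.add_two_mul_choose_two (n : ℕ) : n + 2 * n.choose 2 = n * n := by
  cases n with
  | zero => rfl
  | succ n =>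
    have := Nat.add_one_mul_choose_eq n 1
    simp only [Nat.choose_one_right] at this
    linarith

theorem smul_mul_mul_pow_of_mul_eq_smul {K R : Type*} [Field K] [Semiring R] [Algebra K R]
    {q : K} {a b d : R} {N : ℕ} (hqN : q ^ N = (-1) ^ (N + 1))
    (hab : a * b = q ^ 2 • (b * a)) (hbd : b * d = q ^ 2 • (d * b))
    (hda : d * a = q ^ 2 • (a * d)) :
    (q⁻¹ • (a * b * d)) ^ N = a ^ N * b ^ N * d ^ N := by
  have hq : q ^ N * (q ^ 2) ^ N.choose 2 = 1 := by
    rw [← pow_mul, ← pow_add, Nat.add_two_mul_choose_two, pow_mul, hqN, ← pow_mul,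
      mul_comm, (Nat.even_mul_succ_self N).neg_one_pow]
  rw [smul_pow, mul_assoc, (commute_mul_of_mul_eq_smul hab hda).mul_pow, mul_assoc,
    pow_mul_pow_eq_smul_mul_pow hbd, mul_smul_comm, inv_pow, inv_eq_of_mul_eq_one_right hq]

section Eigenvectors

variable {K V : Type*} [Field K] [AddCommGroup V] [Module K V] {X Y : Module.End K V}
  {c μ : K} {v : V}

theorem Module.End.HasEigenvector.ne_zero_of_isUnit (hv : X.HasEigenvector μ v) (hX : IsUnit X) :
    μ ≠ 0 := by
  rintro rfl
  refine hv.2 (((Module.End.isUnit_iff X).1 hX).1 ?_)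
  rw [hv.apply_eq_smul, zero_smul, map_zero]

theorem Module.End.HasEigenvector.pow_apply_of_mul_eq_smul (hv : X.HasEigenvector μ v)
    (hXY : X * Y = c • (Y * X)) (hY : Function.Injective Y) (k : ℕ) :
    X.HasEigenvector (c ^ k * μ) ((Y ^ k) v) := by
  refine ⟨Module.End.mem_eigenspace_iff.2 ?_, fun h0 => hv.2 ?_⟩
  · rw [← Module.End.mul_apply, mul_pow_eq_smul_pow_mul hXY, LinearMap.smul_apply,
      Module.End.mul_apply, hv.apply_eq_smul, map_smul, smul_smul]
  · rw [Module.End.coe_pow] at h0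
    exact hY.iterate k (h0.trans (iterate_map_zero Y k).symm)

theorem Module.End.HasEigenvector.linearIndependent_pow_apply (hv : X.HasEigenvector μ v)
    (hμ : μ ≠ 0) (hXY : X * Y = c • (Y * X)) (hY : Function.Injective Y) {N : ℕ}
    (hc : IsPrimitiveRoot c N) :
    LinearIndependent K (fun k : Fin N => (Y ^ (k : ℕ)) v) :=
  X.eigenvectors_linearIndependent' (fun k : Fin N => c ^ (k : ℕ) * μ)
    (fun k l hkl => Fin.ext (hc.pow_inj k.2 l.2 (mul_right_cancel₀ hμ hkl))) _
    (fun k => hv.pow_apply_of_mul_eq_smul hXY hY k)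

end Eigenvectors

theorem Module.End.pow_apply_mem_span_pow_apply {R M : Type*} [CommSemiring R] [AddCommMonoid M]
    [Module R M] {Y : Module.End R M} {y : R} {N : ℕ} (hN : 0 < N) (hY : Y ^ N = y • 1) (v : M)
    (m : ℕ) : (Y ^ m) v ∈ Submodule.span R (Set.range fun k : Fin N => (Y ^ (k : ℕ)) v) := by
  have hm : (Y ^ m) v = y ^ (m / N) • (Y ^ (m % N)) v := by
    rw [← Nat.mod_add_div m N, pow_add, pow_mul, hY, smul_pow, one_pow, mul_smul_comm, mul_one,
      Nat.mod_add_div, LinearMap.smul_apply]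
  rw [hm]
  exact Submodule.smul_mem _ _ (Submodule.subset_span ⟨⟨m % N, Nat.mod_lt m hN⟩, rfl⟩)

theorem ne_zero_of_isUnit_smul_one {R A : Type*} [Semiring R] [Semiring A] [Nontrivial A]
    [Module R A] {c : R} (hc : IsUnit (c • (1 : A))) : c ≠ 0 := by
  rintro rfl
  exact not_isUnit_zero (zero_smul R (1 : A) ▸ hc)

section Triangle

variable {q : ℂ} {V : Type*} [AddCommGroup V] [Module ℂ V] {X Y Z : Module.End ℂ V}

theorem IsTriangleTriple.commute_mul_mul (ht : IsTriangleTriple q X Y Z) :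
    Commute (X * Y * Z) X ∧ Commute (X * Y * Z) Y ∧ Commute (X * Y * Z) Z := by
  obtain ⟨-, -, -, hXY, hYZ, hZX⟩ := ht
  have hYZX : X * Y * Z = Y * Z * X := by
    rw [mul_assoc]; exact commute_mul_of_mul_eq_smul hXY hZX
  have hZXY : X * Y * Z = Z * X * Y := by
    rw [hYZX, mul_assoc]; exact commute_mul_of_mul_eq_smul hYZ hXY
  refine ⟨commute_mul_mul_of_mul_eq_smul hXY hZX, ?_, ?_⟩
  · rw [hYZX]; exact commute_mul_mul_of_mul_eq_smul hYZ hXY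
  · rw [hZXY]; exact commute_mul_mul_of_mul_eq_smul hZX hYZ

theorem IsIrreducibleTriangleTriple.exists_eq_smul_one [FiniteDimensional ℂ V]
    (h : IsIrreducibleTriangleTriple q X Y Z) {T : Module.End ℂ V} (hX : Commute T X)
    (hY : Commute T Y) (hZ : Commute T Z) : ∃ c : ℂ, T = c • 1 := by
  have := h.2.1
  obtain ⟨μ, hμ⟩ := T.exists_eigenvalue
  have hinv : TriangleInvariant X Y Z (T.eigenspace μ) :=
    ⟨fun _ hv => Module.End.mapsTo_genEigenspace_of_comm hX μ 1 hv,
      fun _ hv => Module.End.mapsTo_genEigenspace_of_comm hY μ 1 hv,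
      fun _ hv => Module.End.mapsTo_genEigenspace_of_comm hZ μ 1 hv⟩
  have htop := (h.2.2 _ hinv).resolve_left hμ
  exact ⟨μ, LinearMap.ext fun v => Module.End.mem_eigenspace_iff.1 (htop ▸ Submodule.mem_top)⟩

theorem IsTriangleTriple.triangleInvariant_span_pow_apply (ht : IsTriangleTriple q X Y Z)
    (hq : q ≠ 0) {N : ℕ} (hN : 0 < N) {y s μ : ℂ} {v : V} (hY : Y ^ N = y • 1) (hy : y ≠ 0)
    (hXYZ : X * Y * Z = s • 1) (hv : X.HasEigenvector μ v) :
    TriangleInvariant X Y Z (Submodule.span ℂ (Set.range fun k : Fin N => (Y ^ (k : ℕ)) v)) := by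
  obtain ⟨hXu, hYu, -, hXY, hYZ, -⟩ := ht
  set W := Submodule.span ℂ (Set.range fun k : Fin N => (Y ^ (k : ℕ)) v)
  have hmem := Module.End.pow_apply_mem_span_pow_apply hN hY v
  have hmaps (T : Module.End ℂ V) (hT : ∀ k : Fin N, T ((Y ^ (k : ℕ)) v) ∈ W) :
      ∀ u ∈ W, T u ∈ W :=
    fun _ hu => (Submodule.span_le (p := W.comap T)).2 (Set.range_subset_iff.2 hT) hu
  have hμ := hv.ne_zero_of_isUnit hXu
  -- `X * Y` maps both `Z v` and `Y ^ (N - 1) v` to multiples of `v`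
  have hZv : Z v = (s / (y * μ)) • (Y ^ (N - 1)) v := by
    apply ((Module.End.isUnit_iff _).1 (hXu.mul hYu)).1
    calc (X * Y) (Z v) = s • v := by simpa using LinearMap.congr_fun hXYZ v
      _ = (X * Y) ((s / (y * μ)) • (Y ^ (N - 1)) v) := by
        rw [map_smul, Module.End.mul_apply, ← Module.End.mul_apply Y, ← pow_succ',
          Nat.sub_add_cancel hN, hY, LinearMap.smul_apply, Module.End.one_apply, map_smul,
          hv.apply_eq_smul, smul_smul, smul_smul, mul_assoc, div_mul_cancel₀ _ (mul_ne_zero hy hμ)]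
  refine ⟨hmaps X fun k => ?_, hmaps Y fun k => ?_, hmaps Z fun k => ?_⟩
  · rw [(hv.pow_apply_of_mul_eq_smul hXY ((Module.End.isUnit_iff Y).1 hYu).1 k).apply_eq_smul]
    exact W.smul_mem _ (Submodule.subset_span ⟨k, rfl⟩)
  · rw [← Module.End.mul_apply, ← pow_succ']
    exact hmem _
  · have hZY : Z ((Y ^ (k : ℕ)) v) = ((q ^ 2) ^ (k : ℕ))⁻¹ • (Y ^ (k : ℕ)) (Z v) := by
      rw [← Module.End.mul_apply, ← Module.End.mul_apply, pow_mul_eq_smul_mul_pow hYZ,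
        LinearMap.smul_apply, inv_smul_smul₀ (pow_ne_zero _ (pow_ne_zero _ hq))]
    rw [hZY, hZv, map_smul, ← Module.End.mul_apply, ← pow_add]
    exact W.smul_mem _ (W.smul_mem _ (hmem _))

theorem IsIrreducibleTriangleTriple.finrank_eq [FiniteDimensional ℂ V]
    (h : IsIrreducibleTriangleTriple q X Y Z) {N : ℕ} (hN : 0 < N)
    (hq : IsPrimitiveRoot (q ^ 2) N) {y s : ℂ} (hY : Y ^ N = y • 1) (hy : y ≠ 0)
    (hXYZ : X * Y * Z = s • 1) : Module.finrank ℂ V = N := by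
  obtain ⟨ht, hnt, hirr⟩ := h
  obtain ⟨μ, hμ⟩ := X.exists_eigenvalue
  obtain ⟨v, hv⟩ := hμ.exists_hasEigenvector
  have hli := hv.linearIndependent_pow_apply (hv.ne_zero_of_isUnit ht.1) ht.2.2.2.1
    ((Module.End.isUnit_iff Y).1 ht.2.1).1 hq
  have hq0 : q ≠ 0 := (pow_ne_zero_iff two_ne_zero).1 (hq.ne_zero hN.ne')
  have hspan := (hirr _ (ht.triangleInvariant_span_pow_apply hq0 hN hY hy hXYZ hv)).resolve_left
    fun hbot => hv.2 <| (Submodule.mem_bot ℂ).1 <|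
      hbot ▸ Submodule.subset_span ⟨⟨0, hN⟩, by simp⟩
  simpa using Module.finrank_eq_card_basis (Module.Basis.mk hli hspan.ge)

end Triangle

/-- an irreducible triangle triple has scalar N-th powers
X^N = x·Id, Y^N = y·Id, Z^N = z·Id, central element q⁻¹XYZ = h·Id with
h^N = xyz, and the underlying space has dimension N. -/
theorem stmt13 (N : ℕ) (hN : 1 ≤ N) (q : ℂ)
    (hqN : q ^ N = (-1 : ℂ) ^ (N + 1)) (hq : IsPrimitiveRoot (q ^ 2) N)
    (V : Type*) [AddCommGroup V] [Module ℂ V] [FiniteDimensional ℂ V]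
    (X Y Z : Module.End ℂ V) (h : IsIrreducibleTriangleTriple q X Y Z) :
    ∃ x y z h' : ℂ, x ≠ 0 ∧ y ≠ 0 ∧ z ≠ 0 ∧ h' ≠ 0 ∧ h' ^ N = x * y * z ∧
      X ^ N = x • (1 : Module.End ℂ V) ∧ Y ^ N = y • (1 : Module.End ℂ V) ∧
      Z ^ N = z • (1 : Module.End ℂ V) ∧
      q⁻¹ • (X * Y * Z) = h' • (1 : Module.End ℂ V) ∧
      Module.finrank ℂ V = N := by
  have := h.2.1
  obtain ⟨hXu, hYu, hZu, hXY, hYZ, hZX⟩ := h.1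
  have hqN' : (q ^ 2) ^ N = 1 := hq.pow_eq_one
  obtain ⟨x, hx⟩ := h.exists_eq_smul_one ((Commute.refl X).pow_left N)
    (commute_pow_left_of_mul_eq_smul hXY hqN') (commute_pow_right_of_mul_eq_smul hZX hqN').symm
  obtain ⟨y, hy⟩ := h.exists_eq_smul_one (commute_pow_right_of_mul_eq_smul hXY hqN').symm
    ((Commute.refl Y).pow_left N) (commute_pow_left_of_mul_eq_smul hYZ hqN')
  obtain ⟨z, hz⟩ := h.exists_eq_smul_one (commute_pow_left_of_mul_eq_smul hZX hqN')
    (commute_pow_right_of_mul_eq_smul hYZ hqN').symm ((Commute.refl Z).pow_left N)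
  obtain ⟨hcX, hcY, hcZ⟩ := h.1.commute_mul_mul
  obtain ⟨s, hs⟩ := h.exists_eq_smul_one hcX hcY hcZ
  have hx0 := ne_zero_of_isUnit_smul_one (hx ▸ hXu.pow N)
  have hy0 := ne_zero_of_isUnit_smul_one (hy ▸ hYu.pow N)
  have hz0 := ne_zero_of_isUnit_smul_one (hz ▸ hZu.pow N)
  have hpow : (q⁻¹ * s) ^ N = x * y * z := by
    apply smul_left_injective ℂ (one_ne_zero (α := Module.End ℂ V))
    calc (q⁻¹ * s) ^ N • (1 : Module.End ℂ V) = (q⁻¹ • (X * Y * Z)) ^ N := by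
          rw [hs, smul_smul, smul_pow, one_pow]
      _ = X ^ N * Y ^ N * Z ^ N := smul_mul_mul_pow_of_mul_eq_smul hqN hXY hYZ hZX
      _ = (x * y * z) • 1 := by
          rw [hx, hy, hz, smul_mul_smul_comm, smul_mul_smul_comm, one_mul, one_mul]
  refine ⟨x, y, z, q⁻¹ * s, hx0, hy0, hz0,
    ne_zero_pow (by omega) (hpow ▸ mul_ne_zero (mul_ne_zero hx0 hy0) hz0), hpow, hx, hy, hz,
    by rw [hs, smul_smul], h.finrank_eq hN hq hy hy0 hs⟩

end
end

section
/- Let (X, Y, Z) be an irreducible triangle triple on a finite-dimensional complex vector space V, with X^N = x·Id, Y^N = y·Id, Z^N = z·Id and q^{-1}·XYZ = h·Id for nonzero complex numbers x, y, z, h satisfying h^N = x·y·z. Then for all complex numbers u, v, w with u^N = x, v^N = y, w^N = z and u·v·w = h, there exists a linear isomorphism φ : V → ℂ^N such that φ∘X = (uA)∘φ, φ∘Y = (vB)∘φ and φ∘Z = (wC)∘φ. -/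
open TensorProduct

noncomputable section

/-!
After rescaling `X` and `Y` by `u⁻¹` and `v⁻¹` we may assume `X ^ N = Y ^ N = 1`. Since
`X Y = q² Y X`, the operator `Y` carries an eigenvector of `X` for `μ` to one for `q² μ`; starting
from any eigenvector of `X`, a power of `Y` gives `v₀ ≠ 0` with `X v₀ = v₀`. The vectors
`e k = Y ^ k v₀` (`k : ZMod N`) are eigenvectors of `X` for the `N` distinct eigenvalues `q ^ (2k)`,
and `X Y Z = q w` forces `Z e (k + 1) = w q ^ (-1 - 2k) e k`. So their span is invariant, hence
all of `V` by irreducibility, and in the basis `(e k)` the operators are `A`, `B` and `w C`.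
-/

lemma pow_zmod_val_add_one {M : Type*} [Monoid M] {N : ℕ} [NeZero N] {a : M} (ha : a ^ N = 1)
    (k : ZMod N) : a ^ (k + 1).val = a ^ (k.val + 1) := by
  rw [pow_eq_pow_mod (k.val + 1) ha, ← ZMod.val_natCast, Nat.cast_add, ZMod.natCast_zmod_val,
    Nat.cast_one]

lemma inv_smul_pow_eq_one {K A : Type*} [Field K] [Ring A] [Algebra K A] {N : ℕ} {a : A}
    {u x : K} (hu : u ^ N = x) (hx : x ≠ 0) (ha : a ^ N = x • 1) : (u⁻¹ • a) ^ N = 1 := by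
  rw [smul_pow, ha, smul_smul, inv_pow, hu, inv_mul_cancel₀ hx, one_smul]

namespace Module.End

variable {K V : Type*} [Field K] [AddCommGroup V] [Module K V] {X Y Z : Module.End K V} {ζ : K}

lemma mul_pow_eq_smul_pow_mul (hXY : X * Y = ζ • (Y * X)) (m : ℕ) :
    X * Y ^ m = ζ ^ m • (Y ^ m * X) := by
  induction m with
  | zero => simp
  | succ m ih =>
    rw [pow_succ, ← mul_assoc, ih, smul_mul_assoc, mul_assoc, hXY, mul_smul_comm, smul_smul,
      ← mul_assoc, ← pow_succ, ← pow_succ]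

lemma apply_pow_apply_of_apply_eq_smul (hXY : X * Y = ζ • (Y * X)) {μ : K} {v : V}
    (hv : X v = μ • v) (m : ℕ) : X ((Y ^ m) v) = (ζ ^ m * μ) • (Y ^ m) v := by
  rw [← mul_apply, mul_pow_eq_smul_pow_mul hXY, LinearMap.smul_apply, mul_apply, hv, map_smul,
    smul_smul]

lemma exists_apply_eq_self [FiniteDimensional K V] [IsAlgClosed K] [Nontrivial V] {N : ℕ}
    [NeZero N] (hζ : IsPrimitiveRoot ζ N) (hX : X ^ N = 1) (hY : Y ^ N = 1)
    (hXY : X * Y = ζ • (Y * X)) : ∃ v ≠ 0, X v = v := by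
  obtain ⟨μ, hμ⟩ := exists_eigenvalue X
  obtain ⟨v, hv⟩ := hμ.exists_hasEigenvector
  have hμN : μ ^ N = 1 := by
    have h := hv.pow_apply N
    rw [hX, one_apply] at h
    exact smul_left_injective K hv.2 (h.symm.trans (one_smul K v).symm)
  obtain ⟨i, hi, rfl⟩ := hζ.eq_pow_of_pow_eq_one hμN
  refine ⟨(Y ^ (N - i)) v, fun h0 => hv.2 ?_, ?_⟩
  · calc v = (Y ^ N) v := by rw [hY, one_apply]
      _ = (Y ^ i) ((Y ^ (N - i)) v) := by rw [← mul_apply, ← pow_add, Nat.add_sub_cancel' hi.le]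
      _ = 0 := by rw [h0, map_zero]
  · rw [apply_pow_apply_of_apply_eq_smul hXY hv.apply_eq_smul, ← pow_add,
      Nat.sub_add_cancel hi.le, hζ.pow_eq_one, one_smul]

def orbitVec (N : ℕ) (Y : Module.End K V) (v : V) (k : ZMod N) : V := (Y ^ k.val) v

variable {N : ℕ} {v : V}

lemma apply_orbitVec_of_apply_eq_self (hXY : X * Y = ζ • (Y * X)) (hv : X v = v) (k : ZMod N) :
    X (orbitVec N Y v k) = ζ ^ k.val • orbitVec N Y v k := by
  simpa [orbitVec] using apply_pow_apply_of_apply_eq_smul hXY (μ := 1) (by rwa [one_smul]) k.val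

variable [NeZero N]

lemma apply_orbitVec (hY : Y ^ N = 1) (k : ZMod N) :
    Y (orbitVec N Y v k) = orbitVec N Y v (k + 1) := by
  rw [orbitVec, orbitVec, ← mul_apply, ← pow_succ', pow_zmod_val_add_one hY]

lemma orbitVec_ne_zero (hY : Y ^ N = 1) (hv : v ≠ 0) (k : ZMod N) : orbitVec N Y v k ≠ 0 := by
  have hYk : IsUnit (Y ^ k.val) := (IsUnit.of_pow_eq_one hY (NeZero.ne N)).pow _
  exact (map_ne_zero_iff _ ((isUnit_iff _).mp hYk).injective).mpr hv

lemma linearIndependent_orbitVec (hζ : IsPrimitiveRoot ζ N) (hY : Y ^ N = 1)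
    (hXY : X * Y = ζ • (Y * X)) (hv : X v = v) (hv0 : v ≠ 0) :
    LinearIndependent K (orbitVec N Y v) :=
  X.eigenvectors_linearIndependent' (fun k : ZMod N => ζ ^ k.val)
    (fun a b h => ZMod.val_injective N (hζ.pow_inj a.val_lt b.val_lt h)) _
    (fun k => ⟨mem_eigenspace_iff.mpr (apply_orbitVec_of_apply_eq_self hXY hv k),
      orbitVec_ne_zero hY hv0 k⟩)

lemma apply_orbitVec_add_one_of_mul_mul_eq (hζ : ζ ^ N = 1) (hX : X ^ N = 1) (hY : Y ^ N = 1)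
    (hXY : X * Y = ζ • (Y * X)) (hv : X v = v) {c : K} (hXYZ : X * Y * Z = c • 1)
    (k : ZMod N) : Z (orbitVec N Y v (k + 1)) = (c / ζ ^ (k.val + 1)) • orbitVec N Y v k := by
  have hXY_unit : IsUnit (X * Y) :=
    (IsUnit.of_pow_eq_one hX (NeZero.ne N)).mul (IsUnit.of_pow_eq_one hY (NeZero.ne N))
  have hζ0 : ζ ≠ 0 := by rintro rfl; simp [NeZero.ne N] at hζ
  apply ((isUnit_iff _).mp hXY_unit).injective
  rw [← mul_apply, hXYZ, map_smul, mul_apply, apply_orbitVec hY,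
    apply_orbitVec_of_apply_eq_self hXY hv, pow_zmod_val_add_one hζ, smul_smul,
    div_mul_cancel₀ _ (pow_ne_zero _ hζ0), LinearMap.smul_apply, one_apply]

end Module.End

lemma Module.Basis.equivFun_self_eq_pi_single {ι R M : Type*} [Fintype ι] [DecidableEq ι]
    [CommSemiring R] [AddCommMonoid M] [Module R M] (b : Module.Basis ι R M) (k : ι) :
    b.equivFun (b k) = Pi.single k 1 := by
  simp [Finsupp.single_eq_pi_single]

lemma Module.Basis.equivFun_apply_eq_of_forall {ι R M : Type*} [Fintype ι] [DecidableEq ι]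
    [CommSemiring R] [AddCommMonoid M] [Module R M] (b : Module.Basis ι R M)
    {F : Module.End R M} {G : Module.End R (ι → R)}
    (h : ∀ k, b.equivFun (F (b k)) = G (Pi.single k 1)) (t : M) :
    b.equivFun (F t) = G (b.equivFun t) := by
  have : b.equivFun.toLinearMap ∘ₗ F = G ∘ₗ b.equivFun.toLinearMap :=
    b.ext fun k => by simpa [b.equivFun_self_eq_pi_single] using h k
  exact LinearMap.congr_fun this t

lemma opA_single (q : ℂ) {N : ℕ} (k : ZMod N) :
    opA q N (Pi.single k 1) = q ^ (2 * k.val) • Pi.single k 1 := by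
  ext j; by_cases h : j = k <;> simp [opA, h]

lemma opB_single {N : ℕ} (k : ZMod N) : opB N (Pi.single k 1) = Pi.single (k + 1) 1 := by
  ext j; simp [opB, Pi.single_apply, sub_eq_iff_eq_add]

lemma opC_single_add_one (q : ℂ) {N : ℕ} (k : ZMod N) :
    opC q N (Pi.single (k + 1) 1) = q ^ (-1 - 2 * (k.val : ℤ)) • Pi.single k 1 := by
  ext j; by_cases h : j = k <;> simp [opC, h]

lemma TriangleInvariant.of_smul {V : Type*} [AddCommGroup V] [Module ℂ V]
    {X Y Z : Module.End ℂ V} {W : Submodule ℂ V} {a b : ℂ} (ha : a ≠ 0) (hb : b ≠ 0)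
    (h : TriangleInvariant (a • X) (b • Y) Z W) : TriangleInvariant X Y Z W :=
  ⟨fun t ht => by simpa [ha] using W.smul_mem a⁻¹ (h.1 t ht),
    fun t ht => by simpa [hb] using W.smul_mem b⁻¹ (h.2.1 t ht), h.2.2⟩

open Module.End in
theorem exists_linearEquiv_opA_opB_opC {N : ℕ} [NeZero N] {q w : ℂ}
    (hq : IsPrimitiveRoot (q ^ 2) N) {V : Type*} [AddCommGroup V] [Module ℂ V]
    [FiniteDimensional ℂ V] [Nontrivial V] {X Y Z : Module.End ℂ V} (hX : X ^ N = 1)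
    (hY : Y ^ N = 1) (hXY : X * Y = q ^ 2 • (Y * X)) (hXYZ : X * Y * Z = (q * w) • 1)
    (hirr : ∀ W : Submodule ℂ V, TriangleInvariant X Y Z W → W = ⊥ ∨ W = ⊤) :
    ∃ φ : V ≃ₗ[ℂ] CN N, ∀ t : V,
      φ (X t) = opA q N (φ t) ∧ φ (Y t) = opB N (φ t) ∧ φ (Z t) = (w • opC q N) (φ t) := by
  obtain ⟨v, hv0, hv⟩ := exists_apply_eq_self hq hX hY hXY
  set e := orbitVec N Y v
  set S := Submodule.span ℂ (Set.range e)
  have he : ∀ k, e k ∈ S := fun k => Submodule.subset_span ⟨k, rfl⟩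
  have hS : ∀ F : Module.End ℂ V, (∀ k, F (e k) ∈ S) → ∀ t ∈ S, F t ∈ S := fun F hF t ht =>
    (Submodule.span_le (p := S.comap F)).mpr (Set.range_subset_iff.mpr hF) ht
  have hZ : ∀ k, Z (e (k + 1)) = (q * w / (q ^ 2) ^ (k.val + 1)) • e k :=
    apply_orbitVec_add_one_of_mul_mul_eq hq.pow_eq_one hX hY hXY hv hXYZ
  have hspan : S = ⊤ := by
    refine (hirr S ⟨hS X fun k => ?_, hS Y fun k => ?_, hS Z fun k => ?_⟩).resolve_left ?_
    · rw [apply_orbitVec_of_apply_eq_self hXY hv]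
      exact S.smul_mem _ (he k)
    · rw [apply_orbitVec hY]
      exact he _
    · rw [← sub_add_cancel k 1, hZ]
      exact S.smul_mem _ (he _)
    · exact fun h0 => orbitVec_ne_zero hY hv0 0 ((Submodule.eq_bot_iff S).mp h0 _ (he 0))
  let b := Module.Basis.mk (linearIndependent_orbitVec hq hY hXY hv hv0) hspan.ge
  have hb : ∀ k, b.equivFun (e k) = Pi.single k 1 := fun k => by
    rw [← b.equivFun_self_eq_pi_single, Module.Basis.mk_apply]
  have hq0 : q ≠ 0 := ne_zero_pow two_ne_zero (hq.ne_zero (NeZero.ne N))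
  refine ⟨b.equivFun, fun t => ⟨?_, ?_, ?_⟩⟩ <;>
    refine b.equivFun_apply_eq_of_forall (fun k => ?_) t <;> rw [Module.Basis.mk_apply]
  · rw [apply_orbitVec_of_apply_eq_self hXY hv, map_smul, hb, opA_single, pow_mul]
  · rw [apply_orbitVec hY, hb, opB_single]
  · rw [← sub_add_cancel k 1, hZ, map_smul, hb,
      LinearMap.smul_apply, opC_single_add_one, smul_smul]
    congr 1
    rw [show (-1 - 2 * ((k - 1).val : ℤ)) = 1 - 2 * (((k - 1).val + 1 : ℕ) : ℤ) by push_cast; ring,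
      zpow_sub₀ hq0, zpow_mul, zpow_natCast, zpow_one]
    field_simp

theorem stmt14_general (N : ℕ) (hN : 1 ≤ N) (q : ℂ)
    (hq : IsPrimitiveRoot (q ^ 2) N)
    (V : Type*) [AddCommGroup V] [Module ℂ V] [FiniteDimensional ℂ V]
    (X Y Z : Module.End ℂ V) (h : IsIrreducibleTriangleTriple q X Y Z)
    (x y z h' : ℂ) (hx : x ≠ 0) (hy : y ≠ 0)
    (hX : X ^ N = x • (1 : Module.End ℂ V)) (hY : Y ^ N = y • (1 : Module.End ℂ V))
    (hH : q⁻¹ • (X * Y * Z) = h' • (1 : Module.End ℂ V)) :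
    ∀ u v w : ℂ, u ^ N = x → v ^ N = y → w ^ N = z → u * v * w = h' →
      ∃ φ : V ≃ₗ[ℂ] CN N, ∀ t : V,
        φ (X t) = (u • opA q N) (φ t) ∧ φ (Y t) = (v • opB N) (φ t) ∧
        φ (Z t) = (w • opC q N) (φ t) := by
  intro u v w hu hv _ huvw
  have : NeZero N := ⟨by omega⟩
  obtain ⟨⟨-, -, -, hXY, -, -⟩, _, hirr⟩ := h
  have hu0 : u ≠ 0 := by rintro rfl; exact hx (by rw [← hu, zero_pow (NeZero.ne N)])
  have hv0 : v ≠ 0 := by rintro rfl; exact hy (by rw [← hv, zero_pow (NeZero.ne N)])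
  have hq0 : q ≠ 0 := ne_zero_pow two_ne_zero (hq.ne_zero (NeZero.ne N))
  have hXYZ : (u⁻¹ • X) * (v⁻¹ • Y) * Z = (q * w) • 1 := by
    rw [smul_mul_smul_comm, smul_mul_assoc, ← smul_inv_smul₀ hq0 (X * Y * Z), hH, smul_smul,
      smul_smul, ← huvw]
    congr 1
    field_simp
  obtain ⟨φ, hφ⟩ := exists_linearEquiv_opA_opB_opC hq (inv_smul_pow_eq_one hu hx hX)
    (inv_smul_pow_eq_one hv hy hY)
    (by rw [smul_mul_smul_comm, smul_mul_smul_comm, hXY, smul_comm, mul_comm v⁻¹]) hXYZ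
    fun W hW => hirr W (hW.of_smul (inv_ne_zero hu0) (inv_ne_zero hv0))
  refine ⟨φ, fun t => ⟨?_, ?_, (hφ t).2.2⟩⟩
  · rw [LinearMap.smul_apply, ← (hφ t).1, LinearMap.smul_apply, map_smul, smul_inv_smul₀ hu0]
  · rw [LinearMap.smul_apply, ← (hφ t).2.1, LinearMap.smul_apply, map_smul, smul_inv_smul₀ hv0]

/-- an irreducible triangle triple with parameters (x, y, z, h) is
isomorphic to the standard triple (uA, vB, wC) for any N-th roots u, v, w of
x, y, z with u·v·w = h. -/
theorem stmt14 (N : ℕ) (hN : 1 ≤ N) (q : ℂ)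
    (hqN : q ^ N = (-1 : ℂ) ^ (N + 1)) (hq : IsPrimitiveRoot (q ^ 2) N)
    (V : Type*) [AddCommGroup V] [Module ℂ V] [FiniteDimensional ℂ V]
    (X Y Z : Module.End ℂ V) (h : IsIrreducibleTriangleTriple q X Y Z)
    (x y z h' : ℂ) (hx : x ≠ 0) (hy : y ≠ 0) (hz : z ≠ 0) (hh : h' ≠ 0)
    (hN' : h' ^ N = x * y * z)
    (hX : X ^ N = x • (1 : Module.End ℂ V)) (hY : Y ^ N = y • (1 : Module.End ℂ V))
    (hZ : Z ^ N = z • (1 : Module.End ℂ V))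
    (hH : q⁻¹ • (X * Y * Z) = h' • (1 : Module.End ℂ V)) :
    ∀ u v w : ℂ, u ^ N = x → v ^ N = y → w ^ N = z → u * v * w = h' →
      ∃ φ : V ≃ₗ[ℂ] CN N, ∀ t : V,
        φ (X t) = (u • opA q N) (φ t) ∧ φ (Y t) = (v • opB N) (φ t) ∧
        φ (Z t) = (w • opC q N) (φ t) :=
  stmt14_general N hN q hq V X Y Z h x y z h' hx hy hX hY hH

end
end

section
/- Let μ = (uA, vB) and ν = (u′A, v′B) be standard Weyl pairs on ℂ^N, and define P = X_μ^{-1}⊗Id + Y_μ⊗Y_ν^{-1} and Q = q^{-1}·Y_μ⊗X_ν^{-1}Y_ν^{-1} in End(ℂ^N ⊗ ℂ^N). Then: (a) P commutes with X_μ⊗X_ν and with X_μ^{-1}⊗Y_ν + Y_μ⊗Id; (b) Q commutes with X_μ⊗X_ν and with X_μ^{-1}⊗Y_ν + Y_μ⊗Id; (c) QP = q^2·PQ; (d) Q is invertible, and if (μ, ν) is regular (i.e. x_μ^{-1}·y_ν + y_μ ≠ 0 where x_μ = u^N, y_μ = v^N, y_ν = v′^N), then P is invertible. -/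
/-!
If `a b = c b a` and `a' b' = c' b' a'`, then `(a ⊗ a') (b ⊗ b') = c c' (b ⊗ b') (a ⊗ a')`.
Every tensor factor occurring in `X_μ ⊗ X_ν`, `𝕐`, `P`, `Q` is a product of members of a Weyl
pair and their inverses, so the relations (a)–(c) follow by pairing factors whose
`q²`-commutation constants multiply to `1` (resp. `q²`). The summands of `P` and `𝕐` do not
pair up this way; instead `P = (1 ⊗ Y_ν⁻¹) 𝕐`.

`Q` is a nonzero multiple of a tensor product of invertible operators. For `P`, write
`P = (X_μ⁻¹ ⊗ 1)(1 + T)` with `T = X_μ Y_μ ⊗ Y_ν⁻¹`. For a Weyl pair at a primitive `N`-th root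
of unity `(XY)^N = (-1)^(N-1) X^N Y^N`, so `T^N` is the scalar `(-1)^(N-1) x_μ y_μ / y_ν`. It
differs from `(-1)^N` when `(μ, ν)` is regular, and then `-1` is not in the spectrum of `T`.
-/

open TensorProduct

noncomputable section

def QCommute {K A : Type*} [CommSemiring K] [Semiring A] [Algebra K A] (c : K) (a b : A) :
    Prop :=
  a * b = c • (b * a)

open scoped Ring

theorem Ring.commute_inverse_self {M₀ : Type*} [MonoidWithZero M₀] (x : M₀) : Commute x⁻¹ʳ x := by
  by_cases hx : IsUnit x
  · exact (Ring.inverse_mul_cancel x hx).trans (Ring.mul_inverse_cancel x hx).symm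
  · simp [Ring.inverse_non_unit x hx]

namespace QCommute

section Semiring

variable {K A : Type*} [CommSemiring K] [Semiring A] [Algebra K A] {c c' : K} {a a' b b' : A}

theorem _root_.qCommute_one_iff : QCommute (1 : K) a b ↔ Commute a b := by
  rw [QCommute, one_smul]; rfl

theorem _root_.Commute.qCommute_one (h : Commute a b) : QCommute (1 : K) a b :=
  qCommute_one_iff.mpr h

theorem smul (h : QCommute c a b) (r s : K) : QCommute c (r • a) (s • b) := by
  rw [QCommute, smul_mul_smul_comm, h, smul_mul_smul_comm, smul_comm, mul_comm s]

theorem smul_left (h : QCommute c a b) (r : K) : QCommute c (r • a) b := by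
  simpa using h.smul r 1

theorem mul_left (h : QCommute c a b) (h' : QCommute c' a' b) :
    QCommute (c' * c) (a' * a) b := by
  rw [QCommute, mul_assoc, h, mul_smul_comm, ← mul_assoc, h', smul_mul_assoc, smul_smul,
    mul_assoc, mul_comm c]

theorem mul_right (h : QCommute c a b) (h' : QCommute c' a b') :
    QCommute (c * c') a (b * b') := by
  rw [QCommute, ← mul_assoc, h, smul_mul_assoc, mul_assoc, h', mul_smul_comm, smul_smul,
    mul_assoc]

theorem add_right (h : QCommute c a b) (h' : QCommute c a b') : QCommute c a (b + b') := by
  rw [QCommute, mul_add, h, h', add_mul, smul_add]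

theorem inverse_left (h : QCommute c a b) : QCommute c b a⁻¹ʳ := by
  by_cases ha : IsUnit a
  · calc b * a⁻¹ʳ = a⁻¹ʳ * (a * b) * a⁻¹ʳ := by rw [Ring.inverse_mul_cancel_left _ _ ha]
      _ = c • (a⁻¹ʳ * b) := by
        rw [h, mul_smul_comm, smul_mul_assoc, ← mul_assoc, Ring.mul_inverse_cancel_right _ _ ha]
  · simp [QCommute, Ring.inverse_non_unit a ha]

theorem inverse_right (h : QCommute c a b) : QCommute c b⁻¹ʳ a := by
  by_cases hb : IsUnit b
  · calc b⁻¹ʳ * a = b⁻¹ʳ * (a * b) * b⁻¹ʳ := by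
          rw [← mul_assoc, Ring.mul_inverse_cancel_right _ _ hb]
      _ = c • (a * b⁻¹ʳ) := by
        rw [h, mul_smul_comm, smul_mul_assoc, Ring.inverse_mul_cancel_left _ _ hb]
  · simp [QCommute, Ring.inverse_non_unit b hb]

theorem pow_right (h : QCommute c a b) (n : ℕ) : QCommute (c ^ n) a (b ^ n) := by
  induction n with
  | zero => simp [QCommute]
  | succ n ih => rw [pow_succ, pow_succ]; exact ih.mul_right h

theorem pow_mul_pow (h : QCommute c a b) (n : ℕ) :
    a ^ n * b ^ n = c ^ n.choose 2 • (a * b) ^ n := by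
  induction n with
  | zero => simp
  | succ n ih =>
    calc a ^ (n + 1) * b ^ (n + 1) = a ^ n * (a * b ^ n) * b := by
          rw [pow_succ a, pow_succ b]; simp only [mul_assoc]
      _ = c ^ n • (a ^ n * b ^ n * (a * b)) := by
        rw [h.pow_right n, mul_smul_comm, smul_mul_assoc]; simp only [mul_assoc]
      _ = c ^ (n + 1).choose 2 • (a * b) ^ (n + 1) := by
        rw [ih, smul_mul_assoc, smul_smul, ← pow_add, ← pow_succ, Nat.choose_succ_succ,
          Nat.choose_one_right]

end Semiring

theorem symm {K A : Type*} [Field K] [Semiring A] [Algebra K A] {c : K} {a b : A} (hc : c ≠ 0)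
    (h : QCommute c a b) : QCommute c⁻¹ b a := by
  rw [QCommute, h, smul_smul, inv_mul_cancel₀ hc, one_smul]

theorem tensorMap {K V W : Type*} [CommSemiring K] [AddCommMonoid V] [Module K V]
    [AddCommMonoid W] [Module K W] {c c' : K} {a b : Module.End K V} {a' b' : Module.End K W}
    (h : QCommute c a b) (h' : QCommute c' a' b') :
    QCommute (c * c') (map a a') (map b b') := by
  rw [QCommute, ← TensorProduct.map_mul, ← TensorProduct.map_mul, h, h', map_smul_left,
    map_smul_right, smul_smul]

end QCommute

section TensorProductMap

variable {K V W : Type*} [CommSemiring K] [AddCommMonoid V] [Module K V] [AddCommMonoid W]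
  [Module K W]

theorem Commute.tensorMap {a b : Module.End K V} {a' b' : Module.End K W} (h : Commute a b)
    (h' : Commute a' b') : Commute (map a a') (map b b') := by
  rw [Commute, SemiconjBy, ← TensorProduct.map_mul, ← TensorProduct.map_mul, h.eq, h'.eq]

theorem TensorProduct.isUnit_map {f : Module.End K V} {g : Module.End K W} (hf : IsUnit f)
    (hg : IsUnit g) : IsUnit (map f g) := by
  obtain ⟨f, rfl⟩ := hf
  obtain ⟨g, rfl⟩ := hg
  exact ⟨⟨map f g, map ↑f⁻¹ ↑g⁻¹, by simp [← TensorProduct.map_mul],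
    by simp [← TensorProduct.map_mul]⟩, rfl⟩

end TensorProductMap

section FieldAlgebra

variable {K A : Type*} [Field K]

theorem Ring.inverse_algebraMap [Semiring A] [Algebra K A] (t : K) :
    (algebraMap K A t)⁻¹ʳ = algebraMap K A t⁻¹ := by
  rcases eq_or_ne t 0 with rfl | ht
  · simp
  rw [← mul_one (algebraMap K A t)⁻¹ʳ, Ring.inverse_mul_eq_iff_eq_mul _ _ _ (ht.isUnit.map _),
    ← map_mul, mul_inv_cancel₀ ht, map_one]

theorem isUnit_one_add_of_pow_eq_algebraMap [Ring A] [Algebra K A] {a : A} {n : ℕ} {s : K}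
    (h : a ^ n = algebraMap K A s) (hs : s ≠ (-1) ^ n) : IsUnit (1 + a) := by
  have hspec : (-1 : K) ∉ spectrum K a := fun hmem => by
    have := spectrum.pow_mem_pow a n hmem
    rw [h, spectrum.mem_iff, ← map_sub] at this
    exact this ((sub_ne_zero.mpr hs.symm).isUnit.map _)
  rw [spectrum.notMem_iff, map_neg, map_one, ← neg_add', IsUnit.neg_iff] at hspec
  simpa [sub_eq_add_neg, add_comm] using hspec

theorem IsPrimitiveRoot.pow_choose_two {ζ : K} {n : ℕ} (h : IsPrimitiveRoot ζ n) :
    ζ ^ n.choose 2 = (-1) ^ (n - 1) := by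
  obtain ⟨m, rfl | rfl⟩ := Nat.even_or_odd' n
  · rcases eq_or_ne m 0 with rfl | hm
    · simp
    have hζm : ζ ^ m = -1 :=
      (by simpa [hm] using h.pow_of_dvd hm (dvd_mul_left m 2) : IsPrimitiveRoot (ζ ^ m) 2)
        |>.eq_neg_one_of_two_right
    have hchoose : (2 * m).choose 2 = m * (2 * m - 1) := by
      rw [Nat.choose_two_right, mul_assoc, Nat.mul_div_cancel_left _ two_pos]
    rw [hchoose, pow_mul, hζm]
  · have hchoose : (2 * m + 1).choose 2 = (2 * m + 1) * m := by
      rw [Nat.choose_two_right, Nat.add_sub_cancel, mul_comm 2 m, ← mul_assoc,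
        Nat.mul_div_cancel _ two_pos]
    rw [hchoose, pow_mul, h.pow_eq_one, one_pow, Nat.add_sub_cancel, pow_mul]
    simp

theorem QCommute.mul_pow_of_isPrimitiveRoot [Semiring A] [Algebra K A] {ζ : K} {n : ℕ} {a b : A}
    (h : QCommute ζ a b) (hζ : IsPrimitiveRoot ζ n) :
    (a * b) ^ n = (-1 : K) ^ (n - 1) • (a ^ n * b ^ n) := by
  rw [h.pow_mul_pow, hζ.pow_choose_two, smul_smul, ← pow_add, ← two_mul, pow_mul]
  simp

end FieldAlgebra

section TensorWeylPair

variable {K V W : Type*} [Field K] [AddCommMonoid V] [Module K V] [AddCommMonoid W] [Module K W]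
  {c : K} {X₁ Y₁ : Module.End K V} {X₂ Y₂ : Module.End K W}

/- `(map X₁ X₂, tensorY X₁ Y₁ Y₂)` is the tensor product of the Weyl pairs `(X₁, Y₁)` and
`(X₂, Y₂)`, and `opP`, `opQ` are the operators `P`, `Q` of the theorem. -/

def tensorY (X₁ Y₁ : Module.End K V) (Y₂ : Module.End K W) : Module.End K (V ⊗[K] W) :=
  map X₁⁻¹ʳ Y₂ + map Y₁ 1

def opP (X₁ Y₁ : Module.End K V) (Y₂ : Module.End K W) : Module.End K (V ⊗[K] W) :=
  map X₁⁻¹ʳ 1 + map Y₁ Y₂⁻¹ʳ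

def opQ (q : K) (Y₁ : Module.End K V) (X₂ Y₂ : Module.End K W) : Module.End K (V ⊗[K] W) :=
  q⁻¹ • map Y₁ (X₂⁻¹ʳ * Y₂⁻¹ʳ)

theorem qCommute_map_tensorY (h₁ : QCommute c X₁ Y₁) (h₂ : QCommute c X₂ Y₂) :
    QCommute c (map X₁ X₂) (tensorY X₁ Y₁ Y₂) := by
  have hX₁ : QCommute (1 : K) X₁ X₁⁻¹ʳ := (Ring.commute_inverse_self X₁).symm.qCommute_one
  have hX₂ : QCommute (1 : K) X₂ 1 := (Commute.one_right X₂).qCommute_one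
  exact (by simpa using hX₁.tensorMap h₂ : QCommute c _ _).add_right
    (by simpa using h₁.tensorMap hX₂ : QCommute c _ _)

theorem opP_eq_map_mul_tensorY (hY₂ : IsUnit Y₂) :
    opP X₁ Y₁ Y₂ = map 1 Y₂⁻¹ʳ * tensorY X₁ Y₁ Y₂ := by
  simp only [opP, tensorY, mul_add, ← TensorProduct.map_mul, one_mul, mul_one,
    Ring.inverse_mul_cancel Y₂ hY₂]

theorem commute_opP_map (hc : c ≠ 0) (hY₂ : IsUnit Y₂) (h₁ : QCommute c X₁ Y₁)
    (h₂ : QCommute c X₂ Y₂) : Commute (opP X₁ Y₁ Y₂) (map X₁ X₂) := by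
  have hY₂inv : QCommute c⁻¹ (map X₁ X₂) (map 1 Y₂⁻¹ʳ) := by
    simpa using (Commute.one_right X₁).qCommute_one.tensorMap (h₂.inverse_right.symm hc)
  have := hY₂inv.mul_right (qCommute_map_tensorY h₁ h₂)
  rw [inv_mul_cancel₀ hc, qCommute_one_iff, ← opP_eq_map_mul_tensorY hY₂] at this
  exact this.symm

theorem commute_opP_tensorY (hY₂ : IsUnit Y₂) : Commute (opP X₁ Y₁ Y₂) (tensorY X₁ Y₁ Y₂) := by
  rw [opP_eq_map_mul_tensorY hY₂]
  refine Commute.mul_left (Commute.add_right ?_ ?_) (Commute.refl _)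
  · exact (Commute.one_left _).tensorMap (Ring.commute_inverse_self Y₂)
  · exact (Commute.one_left _).tensorMap (Commute.one_right _)

theorem commute_opQ_map (q : K) (hc : c ≠ 0) (h₁ : QCommute c X₁ Y₁) (h₂ : QCommute c X₂ Y₂) :
    Commute (opQ q Y₁ X₂ Y₂) (map X₁ X₂) := by
  have hZ : QCommute c (X₂⁻¹ʳ * Y₂⁻¹ʳ) X₂ := by
    simpa using h₂.inverse_right.mul_left (Ring.commute_inverse_self X₂).qCommute_one
  have := (h₁.symm hc).tensorMap hZ
  rw [inv_mul_cancel₀ hc, qCommute_one_iff] at this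
  exact this.smul_left q⁻¹

theorem commute_opQ_tensorY (q : K) (hc : c ≠ 0) (h₁ : QCommute c X₁ Y₁)
    (h₂ : QCommute c X₂ Y₂) : Commute (opQ q Y₁ X₂ Y₂) (tensorY X₁ Y₁ Y₂) := by
  have hZ := h₂.inverse_left.mul_right (Ring.commute_inverse_self Y₂).symm.qCommute_one
  rw [mul_one] at hZ
  have := h₁.inverse_left.tensorMap (hZ.symm hc)
  rw [mul_inv_cancel₀ hc, qCommute_one_iff] at this
  exact (this.add_right ((Commute.refl Y₁).tensorMap (Commute.one_right _))).smul_left q⁻¹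

theorem qCommute_opQ_opP (q : K) (h₁ : QCommute c X₁ Y₁) (h₂ : QCommute c X₂ Y₂) :
    QCommute c (opQ q Y₁ X₂ Y₂) (opP X₁ Y₁ Y₂) := by
  have hZ : QCommute c (X₂⁻¹ʳ * Y₂⁻¹ʳ) Y₂⁻¹ʳ := by
    simpa using (Commute.refl Y₂⁻¹ʳ).qCommute_one.mul_left h₂.inverse_left.inverse_left
  have hX₁ : QCommute c (map Y₁ (X₂⁻¹ʳ * Y₂⁻¹ʳ)) (map X₁⁻¹ʳ 1) := by
    simpa using h₁.inverse_left.tensorMap (Commute.one_right (X₂⁻¹ʳ * Y₂⁻¹ʳ)).qCommute_one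
  have hY₁ : QCommute c (map Y₁ (X₂⁻¹ʳ * Y₂⁻¹ʳ)) (map Y₁ Y₂⁻¹ʳ) := by
    simpa using (Commute.refl Y₁).qCommute_one.tensorMap hZ
  exact (hX₁.add_right hY₁).smul_left q⁻¹

theorem isUnit_opQ {q : K} (hq : q ≠ 0) (hY₁ : IsUnit Y₁) (hX₂ : IsUnit X₂) (hY₂ : IsUnit Y₂) :
    IsUnit (opQ q Y₁ X₂ Y₂) :=
  (TensorProduct.isUnit_map hY₁ (hX₂.ringInverse.mul hY₂.ringInverse)).smul
    (Units.mk0 q⁻¹ (inv_ne_zero hq))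

theorem opP_eq_map_mul_one_add (hX₁ : IsUnit X₁) :
    opP X₁ Y₁ Y₂ = map X₁⁻¹ʳ 1 * (1 + map (X₁ * Y₁) Y₂⁻¹ʳ) := by
  rw [mul_add, mul_one, ← TensorProduct.map_mul, ← mul_assoc, Ring.inverse_mul_cancel X₁ hX₁,
    one_mul, one_mul, opP]

end TensorWeylPair

theorem isUnit_opP {K V W : Type*} [Field K] [AddCommGroup V] [Module K V] [AddCommGroup W]
    [Module K W] {X₁ Y₁ : Module.End K V} {Y₂ : Module.End K W} (hX₁ : IsUnit X₁) {n : ℕ}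
    {s t : K} (h₁ : (X₁ * Y₁) ^ n = algebraMap K _ s) (h₂ : Y₂ ^ n = algebraMap K _ t)
    (hst : s * t⁻¹ ≠ (-1) ^ n) : IsUnit (opP X₁ Y₁ Y₂) := by
  have hT : map (X₁ * Y₁) Y₂⁻¹ʳ ^ n = algebraMap K _ (s * t⁻¹) := by
    rw [TensorProduct.map_pow, h₁, Ring.inverse_pow, h₂, Ring.inverse_algebraMap,
      Algebra.algebraMap_eq_smul_one, Algebra.algebraMap_eq_smul_one, map_smul_left,
      map_smul_right, TensorProduct.map_one, smul_smul, Algebra.algebraMap_eq_smul_one]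
  rw [opP_eq_map_mul_one_add hX₁]
  exact (TensorProduct.isUnit_map hX₁.ringInverse isUnit_one).mul
    (isUnit_one_add_of_pow_eq_algebraMap hT hst)

section StandardPair

variable {q : ℂ} {N : ℕ}

theorem opA_apply (f : CN N) (k : ZMod N) : opA q N f k = (q ^ 2) ^ k.val * f k := by
  rw [← pow_mul]; rfl

theorem opB_apply (f : CN N) (k : ZMod N) : opB N f k = f (k - 1) := rfl

theorem opA_pow_apply (n : ℕ) (f : CN N) (k : ZMod N) :
    (opA q N ^ n) f k = ((q ^ 2) ^ k.val) ^ n * f k := by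
  induction n generalizing f with
  | zero => simp
  | succ n ih => rw [pow_succ, Module.End.mul_apply, ih, opA_apply, ← mul_assoc, ← pow_succ]

theorem opB_pow_apply (n : ℕ) (f : CN N) (k : ZMod N) : (opB N ^ n) f k = f (k - n) := by
  induction n generalizing f with
  | zero => simp
  | succ n ih => rw [pow_succ, Module.End.mul_apply, ih, opB_apply, Nat.cast_succ, sub_sub]

theorem opA_pow_eq_one (hq : (q ^ 2) ^ N = 1) : opA q N ^ N = 1 :=
  LinearMap.ext fun f => funext fun k => by
    rw [opA_pow_apply, pow_right_comm, hq, one_pow, one_mul]; rfl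

theorem opB_pow_eq_one : opB N ^ N = 1 :=
  LinearMap.ext fun f => funext fun k => by
    rw [opB_pow_apply, ZMod.natCast_self, sub_zero]; rfl

theorem pow_zmod_val_add {M : Type*} [Monoid M] [NeZero N] {ζ : M} (hζ : ζ ^ N = 1)
    (a b : ZMod N) : ζ ^ (a + b).val = ζ ^ a.val * ζ ^ b.val := by
  rw [ZMod.val_add, ← pow_eq_pow_mod _ hζ, pow_add]

theorem qCommute_opA_opB [NeZero N] (hq : (q ^ 2) ^ N = 1) :
    QCommute (q ^ 2) (opA q N) (opB N) :=
  LinearMap.ext fun f => funext fun k => by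
    have hk : (q ^ 2) ^ k.val = q ^ 2 * (q ^ 2) ^ (k - 1).val := by
      rw [← sub_add_cancel k 1, pow_zmod_val_add hq, ZMod.val_one_eq_one_mod,
        ← pow_eq_pow_mod _ hq, sub_add_cancel, mul_comm, pow_one]
    rw [Module.End.mul_apply, opA_apply, opB_apply, LinearMap.smul_apply, Module.End.mul_apply,
      Pi.smul_apply, opB_apply, opA_apply, hk, smul_eq_mul, mul_assoc]

end StandardPair

/-- for standard Weyl pairs μ, ν, the operators
P = X_μ⁻¹⊗Id + Y_μ⊗Y_ν⁻¹ and Q = q⁻¹·Y_μ⊗X_ν⁻¹Y_ν⁻¹ commute with X_μ⊗X_ν and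
with X_μ⁻¹⊗Y_ν + Y_μ⊗Id, satisfy QP = q²PQ, Q is invertible, and P is
invertible whenever (μ, ν) is regular. -/
theorem stmt16 (N : ℕ) (hN : 1 ≤ N) (q : ℂ) (hq : IsPrimitiveRoot (q ^ 2) N)
    (u v u' v' : ℂ) (hu : u ≠ 0) (hv : v ≠ 0) (hu' : u' ≠ 0) (hv' : v' ≠ 0) :
    let Xμ : Module.End ℂ (CN N) := u • opA q N
    let Yμ : Module.End ℂ (CN N) := v • opB N
    let Xν : Module.End ℂ (CN N) := u' • opA q N
    let Yν : Module.End ℂ (CN N) := v' • opB N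
    let P : Module.End ℂ (CN N ⊗[ℂ] CN N) :=
      TensorProduct.map (Ring.inverse Xμ) 1 + TensorProduct.map Yμ (Ring.inverse Yν)
    let Q : Module.End ℂ (CN N ⊗[ℂ] CN N) :=
      q⁻¹ • TensorProduct.map Yμ (Ring.inverse Xν * Ring.inverse Yν)
    let 𝕏 : Module.End ℂ (CN N ⊗[ℂ] CN N) := TensorProduct.map Xμ Xν
    let 𝕐 : Module.End ℂ (CN N ⊗[ℂ] CN N) :=
      TensorProduct.map (Ring.inverse Xμ) Yν + TensorProduct.map Yμ 1
    (P * 𝕏 = 𝕏 * P ∧ P * 𝕐 = 𝕐 * P) ∧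
    (Q * 𝕏 = 𝕏 * Q ∧ Q * 𝕐 = 𝕐 * Q) ∧
    Q * P = q ^ 2 • (P * Q) ∧
    IsUnit Q ∧ ((u ^ N)⁻¹ * v' ^ N + v ^ N ≠ 0 → IsUnit P) := by
  intro Xμ Yμ Xν Yν P Q 𝕏 𝕐
  have : NeZero N := ⟨by omega⟩
  have hq1 : (q ^ 2) ^ N = 1 := hq.pow_eq_one
  have hc : q ^ 2 ≠ 0 := hq.ne_zero (NeZero.ne N)
  have hA : IsUnit (opA q N) := .of_pow_eq_one (opA_pow_eq_one hq1) (NeZero.ne N)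
  have hB : IsUnit (opB N) := .of_pow_eq_one opB_pow_eq_one (NeZero.ne N)
  have hXμ : IsUnit Xμ := hA.smul (Units.mk0 u hu)
  have hYμ : IsUnit Yμ := hB.smul (Units.mk0 v hv)
  have hXν : IsUnit Xν := hA.smul (Units.mk0 u' hu')
  have hYν : IsUnit Yν := hB.smul (Units.mk0 v' hv')
  have hμ : QCommute (q ^ 2) Xμ Yμ := (qCommute_opA_opB hq1).smul u v
  have hν : QCommute (q ^ 2) Xν Yν := (qCommute_opA_opB hq1).smul u' v'
  refine ⟨⟨commute_opP_map hc hYν hμ hν, commute_opP_tensorY hYν⟩,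
    ⟨commute_opQ_map q hc hμ hν, commute_opQ_tensorY q hc hμ hν⟩, qCommute_opQ_opP q hμ hν,
    isUnit_opQ (ne_zero_pow two_ne_zero hc) hYμ hXν hYν, fun hreg =>
      isUnit_opP hXμ (n := N) (s := (-1) ^ (N - 1) * (u ^ N * v ^ N)) (t := v' ^ N) ?_ ?_ ?_⟩
  · rw [hμ.mul_pow_of_isPrimitiveRoot hq, smul_pow, smul_pow, opA_pow_eq_one hq1, opB_pow_eq_one,
      smul_mul_smul_comm, one_mul, smul_smul, Algebra.algebraMap_eq_smul_one]
  · rw [smul_pow, opB_pow_eq_one, Algebra.algebraMap_eq_smul_one]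
  · obtain ⟨n, rfl⟩ := Nat.exists_eq_add_of_le' hN
    rw [Nat.add_sub_cancel, pow_succ (-1 : ℂ) n, mul_assoc, Ne,
      mul_right_inj' (pow_ne_zero n (neg_ne_zero.mpr (one_ne_zero (α := ℂ))))]
    contrapose! hreg
    field_simp at hreg ⊢
    linear_combination hreg

end
end
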